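/- Let H be a real Hilbert space, Y a normed space, and ι : H → Y an injective continuous linear map. Let T > 0 and let f : [0,T] → H be a function such that sup_{t ∈ [0,T]} ‖f(t)‖_H < ∞ and such that the composition ι ∘ f : [0,T] → Y is continuous. Then f is weakly continuous: for every v ∈ H, the map t ↦ ⟪f(t), v⟫_H is continuous on [0,T]. -/

import Mathlib

open scoped RealInnerProductSpace

/-!
Each functional `φ ∈ Y*` gives the continuous map `t ↦ φ (ι (f t)) = ⟪f t, w_φ⟫`, where `w_φ` is
the Riesz representative of `φ ∘ ι`. The vectors `v` for which `t ↦ ⟪f t, v⟫` is continuous form a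
subspace, which is closed because `f` is bounded (so `⟪f t, vₙ⟫ → ⟪f t, v⟫` uniformly in `t`
when `vₙ → v`). By Hahn–Banach and injectivity of `ι`, nothing is orthogonal to all `w_φ`,
so this closed subspace is all of `H`.
-/

open Filter Topology

section

variable {α H : Type*} [NormedAddCommGroup H] [InnerProductSpace ℝ H]

def continuousOnInnerSubmodule [TopologicalSpace α] (f : α → H) (s : Set α) : Submodule ℝ H where
  carrier := {v | ContinuousOn (fun t => ⟪f t, v⟫) s}
  zero_mem' := by
    show ContinuousOn (fun t => ⟪f t, 0⟫) s
    simp only [inner_zero_right]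
    exact continuousOn_const
  add_mem' {v w} (hv : ContinuousOn _ s) (hw : ContinuousOn _ s) := by
    show ContinuousOn (fun t => ⟪f t, v + w⟫) s
    simp only [inner_add_right]
    exact hv.add hw
  smul_mem' c v (hv : ContinuousOn _ s) := by
    show ContinuousOn (fun t => ⟪f t, c • v⟫) s
    simp only [real_inner_smul_right]
    exact continuousOn_const.mul hv

theorem tendstoUniformlyOn_inner_nhds {f : α → H} {s : Set α} {M : ℝ}
    (hM : ∀ t ∈ s, ‖f t‖ ≤ M) (v : H) :
    TendstoUniformlyOn (fun w t => ⟪f t, w⟫) (fun t => ⟪f t, v⟫) (𝓝 v) s := by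
  rw [Metric.tendstoUniformlyOn_iff]
  intro ε hε
  have hsmall : Tendsto (fun w => M * ‖v - w‖) (𝓝 v) (𝓝 0) := by
    simpa using ((tendsto_const_nhds (x := v)).sub (tendsto_id (x := 𝓝 v))).norm.const_mul M
  filter_upwards [hsmall.eventually (gt_mem_nhds hε)] with w hw t ht
  calc dist ⟪f t, v⟫ ⟪f t, w⟫ = |⟪f t, v - w⟫| := by rw [Real.dist_eq, inner_sub_right]
    _ ≤ ‖f t‖ * ‖v - w‖ := abs_real_inner_le_norm _ _
    _ ≤ M * ‖v - w‖ := mul_le_mul_of_nonneg_right (hM t ht) (norm_nonneg _)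
    _ < ε := hw

theorem isClosed_continuousOnInnerSubmodule [TopologicalSpace α] {f : α → H} {s : Set α} {M : ℝ}
    (hM : ∀ t ∈ s, ‖f t‖ ≤ M) : IsClosed (continuousOnInnerSubmodule f s : Set H) :=
  isClosed_iff_frequently.mpr fun v hv => (tendstoUniformlyOn_inner_nhds hM v).continuousOn hv

end

theorem Submodule.eq_top_of_isClosed_of_forall_toDual_symm_comp_mem
    {H Y : Type*} [NormedAddCommGroup H] [InnerProductSpace ℝ H] [CompleteSpace H]
    [NormedAddCommGroup Y] [NormedSpace ℝ Y] {ι : H →L[ℝ] Y} (hinj : Function.Injective ι)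
    {K : Submodule ℝ H} (hK : IsClosed (K : Set H))
    (hmem : ∀ φ : StrongDual ℝ Y, (InnerProductSpace.toDual ℝ H).symm (φ.comp ι) ∈ K) :
    K = ⊤ := by
  have horth : Kᗮ = ⊥ := by
    refine (Submodule.eq_bot_iff _).mpr fun w hw => hinj ?_
    rw [map_zero]
    refine SeparatingDual.eq_zero_of_forall_dual_eq_zero (R := ℝ) fun φ => ?_
    simpa only [InnerProductSpace.toDual_symm_apply, ContinuousLinearMap.comp_apply]
      using hw _ (hmem φ)
  rw [← hK.submodule_topologicalClosure_eq, Submodule.topologicalClosure_eq_top_iff, horth]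

theorem weakly_continuous_of_bounded_of_continuous_embedding_general
    {H Y : Type*} [NormedAddCommGroup H] [InnerProductSpace ℝ H] [CompleteSpace H]
    [NormedAddCommGroup Y] [NormedSpace ℝ Y]
    (ι : H →L[ℝ] Y) (hinj : Function.Injective ι)
    (T : ℝ) (f : ℝ → H)
    (hbd : ∃ M : ℝ, ∀ t ∈ Set.Icc (0 : ℝ) T, ‖f t‖ ≤ M)
    (hcont : ContinuousOn (fun t => ι (f t)) (Set.Icc (0 : ℝ) T)) :
    ∀ v : H, ContinuousOn (fun t => ⟪f t, v⟫) (Set.Icc (0 : ℝ) T) := by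
  obtain ⟨M, hM⟩ := hbd
  have hmem (φ : StrongDual ℝ Y) : (InnerProductSpace.toDual ℝ H).symm (φ.comp ι) ∈
      continuousOnInnerSubmodule f (Set.Icc 0 T) := by
    show ContinuousOn (fun t => ⟪f t, (InnerProductSpace.toDual ℝ H).symm (φ.comp ι)⟫) _
    simp_rw [real_inner_comm _ (f _), InnerProductSpace.toDual_symm_apply]
    exact φ.continuous.comp_continuousOn hcont
  have htop := Submodule.eq_top_of_isClosed_of_forall_toDual_symm_comp_mem hinj
    (isClosed_continuousOnInnerSubmodule hM) hmem
  intro v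
  have hv : v ∈ continuousOnInnerSubmodule f (Set.Icc 0 T) := htop ▸ Submodule.mem_top
  exact hv

/-- Strauss-type weak-continuity lemma: if `H` is a real Hilbert space, `Y` a normed
space, `ι : H → Y` an injective continuous linear map, and `f : [0,T] → H` is bounded
with `ι ∘ f` continuous, then `f` is weakly continuous on `[0,T]`. -/
theorem weakly_continuous_of_bounded_of_continuous_embedding
    {H Y : Type*} [NormedAddCommGroup H] [InnerProductSpace ℝ H] [CompleteSpace H]
    [NormedAddCommGroup Y] [NormedSpace ℝ Y]
    (ι : H →L[ℝ] Y) (hinj : Function.Injective ι)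
    (T : ℝ) (hT : 0 < T) (f : ℝ → H)
    (hbd : ∃ M : ℝ, ∀ t ∈ Set.Icc (0 : ℝ) T, ‖f t‖ ≤ M)
    (hcont : ContinuousOn (fun t => ι (f t)) (Set.Icc (0 : ℝ) T)) :
    ∀ v : H, ContinuousOn (fun t => ⟪f t, v⟫) (Set.Icc (0 : ℝ) T) :=
  weakly_continuous_of_bounded_of_continuous_embedding_general ι hinj T f hbd hcont
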